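/- arXiv:2202.09351 — 5 statements merged into one kernel-verified Lean document; each statement's English description precedes it below -/
import Mathlib

section
/- If P is a subspace of a Lie algebra L over a field of characteristic not 2 such that [P,P]=0 and every nonzero element of P is extremal (i.e., ⁅x,⁅x,L⁆⁆ ⊆ span{x} for all x ∈ P), then P is an inner ideal, i.e., ⁅P,⁅P,L⁆⁆ ⊆ P. -/
/-! Since `P` is abelian, `ad x` and `ad y` commute for `x, y ∈ P`, so polarizing the quadratic map
`x ↦ ⁅x, ⁅x, z⁆⁆` gives `⁅x + y, ⁅x + y, z⁆⁆ - ⁅x, ⁅x, z⁆⁆ - ⁅y, ⁅y, z⁆⁆ = 2 • ⁅x, ⁅y, z⁆⁆`.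
Extremality puts the left side in `P`, and `2` is invertible. -/

section LieRing

variable {L : Type*} [LieRing L]

theorem lie_lie_comm_of_lie_eq_zero {x y : L} (h : ⁅x, y⁆ = 0) (z : L) :
    ⁅x, ⁅y, z⁆⁆ = ⁅y, ⁅x, z⁆⁆ := by
  simpa [h] using leibniz_lie x y z

theorem lie_add_lie_add_sub_of_lie_eq_zero {x y : L} (h : ⁅x, y⁆ = 0) (z : L) :
    ⁅x + y, ⁅x + y, z⁆⁆ - ⁅x, ⁅x, z⁆⁆ - ⁅y, ⁅y, z⁆⁆ = ⁅x, ⁅y, z⁆⁆ + ⁅x, ⁅y, z⁆⁆ := by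
  simp only [add_lie, lie_add, lie_lie_comm_of_lie_eq_zero h z]
  abel

end LieRing

theorem Submodule.lie_lie_self_mem_of_extremal {F L : Type*} [Field F] [LieRing L]
    [LieAlgebra F L] {P : Submodule F L}
    (hext : ∀ x ∈ P, x ≠ 0 → ∀ z : L, ∃ c : F, ⁅x, ⁅x, z⁆⁆ = c • x)
    {x : L} (hx : x ∈ P) (z : L) : ⁅x, ⁅x, z⁆⁆ ∈ P := by
  rcases eq_or_ne x 0 with rfl | hx0
  · simp
  obtain ⟨c, hc⟩ := hext x hx hx0 z
  exact hc ▸ P.smul_mem c hx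

/-- If `P` is a subspace of a Lie algebra `L` over a field of characteristic ≠ 2 with
`⁅P,P⁆ = 0` all of whose nonzero elements are extremal, then `P` is an inner ideal. -/
theorem pointSpace_is_innerIdeal {F L : Type*} [Field F] [LieRing L] [LieAlgebra F L]
    (hchar : (2 : F) ≠ 0)
    (P : Submodule F L)
    (habelian : ∀ x ∈ P, ∀ y ∈ P, ⁅x, y⁆ = 0)
    (hext : ∀ x ∈ P, x ≠ 0 → ∀ z : L, ∃ c : F, ⁅x, ⁅x, z⁆⁆ = c • x) :
    ∀ x ∈ P, ∀ y ∈ P, ∀ z : L, ⁅x, ⁅y, z⁆⁆ ∈ P := by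
  intro x hx y hy z
  have hsq : ∀ w ∈ P, ∀ z : L, ⁅w, ⁅w, z⁆⁆ ∈ P := fun w hw =>
    P.lie_lie_self_mem_of_extremal hext hw
  have htwice : (2 : F) • ⁅x, ⁅y, z⁆⁆ ∈ P := by
    rw [two_smul, ← lie_add_lie_add_sub_of_lie_eq_zero (habelian x hx y hy)]
    exact P.sub_mem (P.sub_mem (hsq _ (P.add_mem hx hy) z) (hsq x hx z)) (hsq y hy z)
  exact (P.smul_mem_iff hchar).mp htwice
end

section
/- Let {e,h,f} be an sl2-triple in a Lie algebra L over a field of characteristic 0 such that ad h acts diagonally with eigenvalues in {-2,-1,0,1,2}. Then every element x in the eigenspace L_2 = {x : ⁅h,x⁆ = 2x} satisfies 4x = ⁅e,⁅e,⁅f,⁅f,x⁆⁆⁆⁆. -/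
/-!
The bracket `⁅e, x⁆` is an eigenvector of `ad h` for the eigenvalue `4`; since eigenspaces for
distinct eigenvalues are independent and `L` is the sum of those for `-2, …, 2`, it vanishes.
So `x` is a primitive vector of weight `2`, and the `sl₂` relations give `⁅e, ⁅f, x⁆⁆ = 2 • x` and
`⁅e, ⁅f, ⁅f, x⁆⁆⁆ = 2 • ⁅f, x⁆`.
-/

theorem Module.End.eigenspace_eq_bot_of_biSup_eigenspace_eq_top {R M : Type*} [CommRing R]
    [IsDomain R] [AddCommGroup M] [Module R M] [IsTorsionFree R M] {φ : Module.End R M}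
    {μ : R} {S : Set R} (hμ : μ ∉ S) (hS : ⨆ ν ∈ S, φ.eigenspace ν = ⊤) :
    φ.eigenspace μ = ⊥ := by
  simpa [hS] using φ.eigenspaces_iSupIndep.disjoint_biSup hμ

section

variable {F L : Type*} [Field F] [LieRing L] [LieAlgebra F L]

theorem lie_lie_eq_add_smul {h a b : L} {s t : F} (ha : ⁅h, a⁆ = s • a) (hb : ⁅h, b⁆ = t • b) :
    ⁅h, ⁅a, b⁆⁆ = (s + t) • ⁅a, b⁆ := by
  rw [leibniz_lie, ha, hb, smul_lie, lie_smul, add_smul]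

theorem LieAlgebra.mem_eigenspace_ad_iff {h y : L} {ν : F} :
    y ∈ (ad F L h).eigenspace ν ↔ ⁅h, y⁆ = ν • y :=
  Module.End.mem_eigenspace_iff

theorem LieAlgebra.biSup_eigenspace_ad_eq_top {h : L}
    (hdiag : ∀ x : L, ∃ a b c d g : L,
      x = a + b + c + d + g ∧ ⁅h, a⁆ = (-2 : F) • a ∧ ⁅h, b⁆ = (-1 : F) • b ∧
      ⁅h, c⁆ = 0 ∧ ⁅h, d⁆ = (1 : F) • d ∧ ⁅h, g⁆ = (2 : F) • g) :
    ⨆ ν ∈ ({-2, -1, 0, 1, 2} : Set F), (ad F L h).eigenspace ν = ⊤ := by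
  refine Submodule.eq_top_iff'.mpr fun x => ?_
  have mem : ∀ ν ∈ ({-2, -1, 0, 1, 2} : Set F), ∀ y : L, ⁅h, y⁆ = ν • y →
      y ∈ ⨆ ν ∈ ({-2, -1, 0, 1, 2} : Set F), (ad F L h).eigenspace ν := fun ν hν y hy =>
    Submodule.mem_iSup_of_mem ν <| Submodule.mem_iSup_of_mem hν <| mem_eigenspace_ad_iff.mpr hy
  obtain ⟨a, b, c, d, g, rfl, ha, hb, hc, hd, hg⟩ := hdiag x
  refine add_mem (add_mem (add_mem (add_mem ?_ ?_) ?_) ?_) ?_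
  · exact mem _ (by simp) a ha
  · exact mem _ (by simp) b hb
  · exact mem 0 (by simp) c (by rw [hc, zero_smul])
  · exact mem _ (by simp) d hd
  · exact mem _ (by simp) g hg

end

/-- For an sl2-triple `{e,h,f}` with `ad h` diagonalizable with eigenvalues in
`{-2,-1,0,1,2}`, every `x` in the 2-eigenspace satisfies `4x = ⁅e,⁅e,⁅f,⁅f,x⁆⁆⁆⁆`. -/
theorem sl2_top_eigenspace_formula {F L : Type*} [Field F] [CharZero F] [LieRing L]
    [LieAlgebra F L] (e h f : L)
    (hhe : ⁅h, e⁆ = (2 : F) • e) (hef : ⁅e, f⁆ = h) (hhf : ⁅h, f⁆ = -((2 : F) • f))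
    (hdiag : ∀ x : L, ∃ a b c d g : L,
      x = a + b + c + d + g ∧ ⁅h, a⁆ = (-2 : F) • a ∧ ⁅h, b⁆ = (-1 : F) • b ∧
      ⁅h, c⁆ = 0 ∧ ⁅h, d⁆ = (1 : F) • d ∧ ⁅h, g⁆ = (2 : F) • g) :
    ∀ x : L, ⁅h, x⁆ = (2 : F) • x → (4 : F) • x = ⁅e, ⁅e, ⁅f, ⁅f, x⁆⁆⁆⁆ := by
  intro x hx
  have no_weight_four : (LieAlgebra.ad F L h).eigenspace (4 : F) = ⊥ :=
    Module.End.eigenspace_eq_bot_of_biSup_eigenspace_eq_top (by norm_num)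
      (LieAlgebra.biSup_eigenspace_ad_eq_top hdiag)
  have hex : ⁅e, x⁆ = 0 := by
    rw [← Submodule.mem_bot F, ← no_weight_four, LieAlgebra.mem_eigenspace_ad_iff,
      lie_lie_eq_add_smul hhe hx]
    norm_num
  have hfx : ⁅h, ⁅f, x⁆⁆ = 0 := by
    rw [lie_lie_eq_add_smul (by rwa [← neg_smul] at hhf) hx, neg_add_cancel, zero_smul]
  have hefx : ⁅e, ⁅f, x⁆⁆ = (2 : F) • x := by
    rw [leibniz_lie, hef, hx, hex, lie_zero, add_zero]
  have heffx : ⁅e, ⁅f, ⁅f, x⁆⁆⁆ = (2 : F) • ⁅f, x⁆ := by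
    rw [leibniz_lie, hef, hfx, hefx, lie_smul, zero_add]
  rw [heffx, lie_smul, hefx, smul_smul]
  norm_num
end

section
/- With notation as above, B_I = ⊕_{α ∈ Φ_I} L_α is an inner ideal of L: ⁅B_I, ⁅B_I, L⁆⁆ ⊆ B_I. -/
/-!
By trilinearity of `⁅x, ⁅y, z⁆⁆` it suffices to take `x, y, z` in root spaces `L_α, L_β, L_γ`
with `α, β ∈ Φ_I` and `γ ∈ Φ ∪ {0}`. For `j ∈ I` the coefficient bounds of the highest root give
`(α + β + γ) j ≥ m j + m j - m j = m j > 0`. So `α + β + γ` is nonzero, and it is either not a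
root, in which case its root space vanishes, or a root whose coefficients on `I` are pinned to
their maximum, i.e. an element of `Φ_I`.
-/

theorem Submodule.biSup_induction {R M ι : Type*} [Semiring R] [AddCommMonoid M] [Module R M]
    {p : ι → Submodule R M} {s : Set ι} {motive : M → Prop} {x : M}
    (hx : x ∈ ⨆ i ∈ s, p i) (mem : ∀ i ∈ s, ∀ x ∈ p i, motive x) (zero : motive 0)
    (add : ∀ x y, motive x → motive y → motive (x + y)) : motive x := by
  rw [← iSup_subtype''] at hx
  exact Submodule.iSup_induction _ (motive := motive) hx (fun i => mem i i.2) zero add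

theorem lie_lie_mem_of_mem_biSup {R L ι : Type*} [Semiring R] [LieRing L] [Module R L]
    {p : ι → Submodule R L} {s t u : Set ι} {B : Submodule R L}
    (h : ∀ a ∈ s, ∀ b ∈ t, ∀ c ∈ u, ∀ x ∈ p a, ∀ y ∈ p b, ∀ z ∈ p c, ⁅x, ⁅y, z⁆⁆ ∈ B)
    {x y z : L} (hx : x ∈ ⨆ a ∈ s, p a) (hy : y ∈ ⨆ b ∈ t, p b) (hz : z ∈ ⨆ c ∈ u, p c) :
    ⁅x, ⁅y, z⁆⁆ ∈ B := by
  refine Submodule.biSup_induction (motive := fun x => ⁅x, ⁅y, z⁆⁆ ∈ B) hx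
    (fun a ha x hx => ?_) (by simp)
    fun x x' hx hx' => by simpa only [add_lie] using B.add_mem hx hx'
  refine Submodule.biSup_induction (motive := fun y => ⁅x, ⁅y, z⁆⁆ ∈ B) hy
    (fun b hb y hy => ?_) (by simp)
    fun y y' hy hy' => by simpa only [add_lie, lie_add] using B.add_mem hy hy'
  refine Submodule.biSup_induction (motive := fun z => ⁅x, ⁅y, z⁆⁆ ∈ B) hz
    (fun c hc z hz => h a ha b hb c hc x hx y hy z hz) (by simp)
    fun z z' hz hz' => by simpa only [lie_add] using B.add_mem hz hz'

section RootCoefficients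

variable {ι : Type*} (Φ : Set (ι → ℤ)) (m : ι → ℤ) (I : Set ι)

/-- `Φ_I`: the roots whose coefficients on `I` are those of the highest root `m`. -/
def rootsMaxOn : Set (ι → ℤ) :=
  {α ∈ Φ | ∀ j ∈ I, α j = m j}

variable {Φ m I}

theorem le_add_add_apply {α β γ : ι → ℤ} (hα : α ∈ rootsMaxOn Φ m I)
    (hβ : β ∈ rootsMaxOn Φ m I) {j : ι} (hj : j ∈ I) (hγ : -m j ≤ γ j) :
    m j ≤ (α + (β + γ)) j := by
  simp only [Pi.add_apply, hα.2 j hj, hβ.2 j hj]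
  omega

theorem add_add_mem_rootsMaxOn (hhigh : ∀ α ∈ Φ, ∀ i, α i ≤ m i) {α β γ : ι → ℤ}
    (hα : α ∈ rootsMaxOn Φ m I) (hβ : β ∈ rootsMaxOn Φ m I) (hγ : ∀ j ∈ I, -m j ≤ γ j)
    (hroot : α + (β + γ) ∈ Φ) : α + (β + γ) ∈ rootsMaxOn Φ m I :=
  ⟨hroot, fun j hj =>
    le_antisymm (hhigh _ hroot j) (le_add_add_apply hα hβ hj (hγ j hj))⟩

theorem add_add_ne_zero {α β γ : ι → ℤ} (hα : α ∈ rootsMaxOn Φ m I)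
    (hβ : β ∈ rootsMaxOn Φ m I) {j : ι} (hj : j ∈ I) (hmj : 0 < m j) (hγ : -m j ≤ γ j) :
    α + (β + γ) ≠ 0 := fun h => by
  have := le_add_add_apply hα hβ hj hγ
  rw [h, Pi.zero_apply] at this
  omega

end RootCoefficients

theorem lie_lie_mem_iSup_rootSpace_rootsMaxOn {R L ι : Type*} [Semiring R] [LieRing L]
    [Module R L] {Φ : Set (ι → ℤ)} {m : ι → ℤ} {I : Set ι} (hm : ∀ i, 0 < m i)
    (hhigh : ∀ α ∈ Φ, ∀ i, α i ≤ m i) (hlow : ∀ α ∈ Φ, ∀ i, -m i ≤ α i)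
    {rootSpace : (ι → ℤ) → Submodule R L}
    (hbr : ∀ α β : ι → ℤ, ∀ x ∈ rootSpace α, ∀ y ∈ rootSpace β, ⁅x, y⁆ ∈ rootSpace (α + β))
    (hnotroot : ∀ γ : ι → ℤ, γ ∉ Φ → γ ≠ 0 → rootSpace γ = ⊥)
    {j : ι} (hj : j ∈ I) {α β γ : ι → ℤ} (hα : α ∈ rootsMaxOn Φ m I)
    (hβ : β ∈ rootsMaxOn Φ m I) (hγ : γ ∈ insert 0 Φ) {x y z : L}
    (hx : x ∈ rootSpace α) (hy : y ∈ rootSpace β) (hz : z ∈ rootSpace γ) :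
    ⁅x, ⁅y, z⁆⁆ ∈ ⨆ δ ∈ rootsMaxOn Φ m I, rootSpace δ := by
  have hγlow : ∀ i, -m i ≤ γ i := by
    rcases hγ with rfl | hγ
    · exact fun i => by simpa using (hm i).le
    · exact hlow γ hγ
  have hxyz := hbr _ _ _ hx _ (hbr _ _ _ hy _ hz)
  by_cases hroot : α + (β + γ) ∈ Φ
  · exact le_biSup rootSpace
      (add_add_mem_rootsMaxOn hhigh hα hβ (fun i _ => hγlow i) hroot) hxyz
  · rw [hnotroot _ hroot (add_add_ne_zero hα hβ hj (hm j) (hγlow j)),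
      Submodule.mem_bot] at hxyz
    rw [hxyz]
    exact zero_mem _

theorem B_I_innerIdeal_general {L : Type*} [LieRing L] [LieAlgebra ℂ L] {ι : Type*}
    (Φ : Set (ι → ℤ)) (m : ι → ℤ)
    (hm : ∀ i, 0 < m i)
    (hhigh : ∀ α ∈ Φ, ∀ i, α i ≤ m i)
    (hlow : ∀ α ∈ Φ, ∀ i, -m i ≤ α i)
    (rootSpace : (ι → ℤ) → Submodule ℂ L)
    (hbr : ∀ α β : ι → ℤ, ∀ x ∈ rootSpace α, ∀ y ∈ rootSpace β,
      ⁅x, y⁆ ∈ rootSpace (α + β))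
    (hnotroot : ∀ γ : ι → ℤ, γ ∉ Φ → γ ≠ 0 → rootSpace γ = ⊥)
    (hdecomp : (⨆ γ ∈ insert (0 : ι → ℤ) Φ, rootSpace γ) = ⊤)
    (I : Set ι) (hI : I.Nonempty) :
    ∀ x ∈ (⨆ α ∈ {α ∈ Φ | ∀ j ∈ I, α j = m j}, rootSpace α),
      ∀ y ∈ (⨆ α ∈ {α ∈ Φ | ∀ j ∈ I, α j = m j}, rootSpace α), ∀ z : L,
        ⁅x, ⁅y, z⁆⁆ ∈ (⨆ α ∈ {α ∈ Φ | ∀ j ∈ I, α j = m j}, rootSpace α) := by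
  obtain ⟨j, hj⟩ := hI
  intro x hx y hy z
  have hz : z ∈ ⨆ γ ∈ insert (0 : ι → ℤ) Φ, rootSpace γ := hdecomp ▸ Submodule.mem_top
  exact lie_lie_mem_of_mem_biSup (fun α hα β hβ γ hγ _ hx _ hy _ hz =>
    lie_lie_mem_iSup_rootSpace_rootsMaxOn hm hhigh hlow hbr hnotroot hj hα hβ hγ hx hy hz)
    hx hy hz

/-- With roots encoded by their coefficient tuples relative to a base, `m` the coefficients
of the highest root, `B_I = ⊕_{α ∈ Φ_I} L_α` is an inner ideal of `L`. -/
theorem B_I_innerIdeal {L : Type*} [LieRing L] [LieAlgebra ℂ L] {ι : Type*} [Fintype ι]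
    (Φ : Set (ι → ℤ)) (m : ι → ℤ) (hmΦ : m ∈ Φ)
    (hm : ∀ i, 0 < m i)
    (hhigh : ∀ α ∈ Φ, ∀ i, α i ≤ m i)
    (hlow : ∀ α ∈ Φ, ∀ i, -m i ≤ α i)
    (rootSpace : (ι → ℤ) → Submodule ℂ L)
    (hbr : ∀ α β : ι → ℤ, ∀ x ∈ rootSpace α, ∀ y ∈ rootSpace β,
      ⁅x, y⁆ ∈ rootSpace (α + β))
    (hnotroot : ∀ γ : ι → ℤ, γ ∉ Φ → γ ≠ 0 → rootSpace γ = ⊥)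
    (hdecomp : (⨆ γ ∈ insert (0 : ι → ℤ) Φ, rootSpace γ) = ⊤)
    (I : Set ι) (hI : I.Nonempty) :
    ∀ x ∈ (⨆ α ∈ {α ∈ Φ | ∀ j ∈ I, α j = m j}, rootSpace α),
      ∀ y ∈ (⨆ α ∈ {α ∈ Φ | ∀ j ∈ I, α j = m j}, rootSpace α), ∀ z : L,
        ⁅x, ⁅y, z⁆⁆ ∈ (⨆ α ∈ {α ∈ Φ | ∀ j ∈ I, α j = m j}, rootSpace α) :=
  B_I_innerIdeal_general Φ m hm hhigh hlow rootSpace hbr hnotroot hdecomp I hI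
end

section
/- Let L be a Lie algebra over a field of characteristic 0 and B an abelian inner ideal. If e ∈ B embeds in an sl2-triple {e,h,f} with ⁅e,f⁆ = h, ⁅h,e⁆ = 2e, ⁅h,f⁆ = -2f, then e has ad-nilpotency index exactly 3: (ad e)^3 = 0 but (ad e)^2 ≠ 0. -/
theorem lie_lie_lie_eq_zero_of_inner_abelian {R L : Type*} [CommRing R] [LieRing L]
    [LieAlgebra R L] (B : Submodule R L)
    (hinner : ∀ x ∈ B, ∀ y ∈ B, ∀ z : L, ⁅x, ⁅y, z⁆⁆ ∈ B)
    (habelian : ∀ x ∈ B, ∀ y ∈ B, ⁅x, y⁆ = 0)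
    {a b c : L} (ha : a ∈ B) (hb : b ∈ B) (hc : c ∈ B) (x : L) :
    ⁅a, ⁅b, ⁅c, x⁆⁆⁆ = 0 :=
  habelian a ha _ (hinner b hb c hc x)

theorem lie_lie_eq_neg_two_smul {R L : Type*} [CommRing R] [LieRing L] [LieAlgebra R L]
    {e h f : L} (hef : ⁅e, f⁆ = h) (hhe : ⁅h, e⁆ = (2 : R) • e) :
    ⁅e, ⁅e, f⁆⁆ = -((2 : R) • e) := by
  rw [hef, ← lie_skew, hhe]

theorem ad_index_exactly_three_general {F L : Type*} [Field F] [CharZero F] [LieRing L]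
    [LieAlgebra F L] (B : Submodule F L)
    (hinner : ∀ x ∈ B, ∀ y ∈ B, ∀ z : L, ⁅x, ⁅y, z⁆⁆ ∈ B)
    (habelian : ∀ x ∈ B, ∀ y ∈ B, ⁅x, y⁆ = 0)
    (e h f : L) (heB : e ∈ B) (he : e ≠ 0)
    (hef : ⁅e, f⁆ = h) (hhe : ⁅h, e⁆ = (2 : F) • e) :
    (∀ x : L, ⁅e, ⁅e, ⁅e, x⁆⁆⁆ = 0) ∧ ¬(∀ x : L, ⁅e, ⁅e, x⁆⁆ = 0) := by
  refine ⟨lie_lie_lie_eq_zero_of_inner_abelian B hinner habelian heB heB heB, fun hsq => ?_⟩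
  have h2e : -((2 : F) • e) = 0 := (lie_lie_eq_neg_two_smul hef hhe).symm.trans (hsq f)
  exact he (smul_eq_zero.mp (neg_eq_zero.mp h2e) |>.resolve_left two_ne_zero)

/-- An element of an abelian inner ideal embedded in an sl2-triple has ad-nilpotency index
exactly 3 (char 0). -/
theorem ad_index_exactly_three {F L : Type*} [Field F] [CharZero F] [LieRing L]
    [LieAlgebra F L] (B : Submodule F L)
    (hinner : ∀ x ∈ B, ∀ y ∈ B, ∀ z : L, ⁅x, ⁅y, z⁆⁆ ∈ B)
    (habelian : ∀ x ∈ B, ∀ y ∈ B, ⁅x, y⁆ = 0)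
    (e h f : L) (heB : e ∈ B) (he : e ≠ 0)
    (hef : ⁅e, f⁆ = h) (hhe : ⁅h, e⁆ = (2 : F) • e) (hhf : ⁅h, f⁆ = -((2 : F) • f)) :
    (∀ x : L, ⁅e, ⁅e, ⁅e, x⁆⁆⁆ = 0) ∧ ¬(∀ x : L, ⁅e, ⁅e, x⁆⁆ = 0) :=
  ad_index_exactly_three_general B hinner habelian e h f heB he hef hhe
end

section
/- Let 𝒜 be an associative unital algebra with involution x ↦ x̄, viewed as a structurable algebra with V_{x,y}(z) = (x ȳ)z + (z ȳ)x - (z x̄)y. Then the identity [V_{x,y}, V_{z,w}] = V_{V_{x,y}(z), w} - V_{z, V_{y,x}(w)} holds for all x,y,z,w ∈ 𝒜. -/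
/-- The `V`-operator of a unital associative algebra with involution. -/
def Vop {A : Type*} [Ring A] [StarRing A] (x y z : A) : A :=
  (x * star y) * z + (z * star y) * x - (z * star x) * y

theorem assoc_with_involution_structurable_general {A : Type*} [Ring A]
    [StarRing A] :
    ∀ x y z w a : A,
      Vop x y (Vop z w a) - Vop z w (Vop x y a) =
        Vop (Vop x y z) w a - Vop z (Vop y x w) a := by
  intro x y z w a
  simp only [Vop, star_add, star_sub, star_mul, star_star]
  noncomm_ring

/-- A unital associative algebra with involution is structurable:
`[V_{x,y}, V_{z,w}] = V_{V_{x,y}(z),w} - V_{z,V_{y,x}(w)}`. -/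
theorem assoc_with_involution_structurable {F A : Type*} [Field F] [Ring A] [Algebra F A]
    [StarRing A] (h2 : (2 : F) ≠ 0) (h3 : (3 : F) ≠ 0) :
    ∀ x y z w a : A,
      Vop x y (Vop z w a) - Vop z w (Vop x y a) =
        Vop (Vop x y z) w a - Vop z (Vop y x w) a :=
  assoc_with_involution_structurable_general
end
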